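/- arXiv:2303.17327 — 2 statements merged into one kernel-verified Lean document; each statement's English description precedes it below -/
import Mathlib

section
/- No set A ⊆ 2^ω that is not an (s⁰)-set admits a Kuratowski partition; i.e., there is no partition F of A into (s⁰)-sets such that ⋃F' is an (s)-set for every subfamily F' ⊆ F. -/
open Set

/-- A perfect (Sacks) tree: nonempty, downward closed, and every node has a splitting extension. -/
def IsPerfectTree (T : Set (List Bool)) : Prop :=
  T.Nonempty ∧ (∀ t ∈ T, ∀ n, t.take n ∈ T) ∧
    ∀ t ∈ T, ∃ s ∈ T, t <+: s ∧ s ++ [false] ∈ T ∧ s ++ [true] ∈ T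

/-- The set of infinite branches of a tree. -/
def branches (T : Set (List Bool)) : Set (ℕ → Bool) :=
  {x | ∀ n, (List.ofFn fun i : Fin n => x i) ∈ T}

/-- `A` is an (s)-set. -/
def MarczewskiS (A : Set (ℕ → Bool)) : Prop :=
  ∀ T, IsPerfectTree T → ∃ Q, IsPerfectTree Q ∧ Q ⊆ T ∧
    (branches Q ⊆ A ∨ branches Q ∩ A = ∅)

/-- `A` is an (s⁰)-set. -/
def S0Set (A : Set (ℕ → Bool)) : Prop :=
  ∀ T, IsPerfectTree T → ∃ Q, IsPerfectTree Q ∧ Q ⊆ T ∧ branches Q ∩ A = ∅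

/-!
Choose a representative in every cell of the partition and let `f x` be the representative of
the cell of `x`. As every union of cells is an (s)-set, each coordinate of `f` is constant on a
perfect subtree below any perfect tree whose branches lie in `A`, and such a tree `Q` exists
because `A` is an (s)-set but not an (s⁰)-set. A fusion argument gives a perfect `R ⊆ Q` on
whose branches `f` is constant or injective. If constant, `[R]` lies in a single cell, which is
an (s⁰)-set. If injective, then for a Bernstein set `S` the cells meeting `S ∩ [R]` form a
subfamily whose union is not an (s)-set.
-/

def initSeg (x : ℕ → Bool) (n : ℕ) : List Bool := List.ofFn fun i : Fin n => x i

@[simp] lemma length_initSeg (x : ℕ → Bool) (n : ℕ) : (initSeg x n).length = n := by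
  simp [initSeg]

@[simp] lemma getElem_initSeg (x : ℕ → Bool) {n i : ℕ} (h : i < (initSeg x n).length) :
    (initSeg x n)[i] = x i := by
  simp [initSeg]

lemma take_initSeg (x : ℕ → Bool) {m n : ℕ} (h : m ≤ n) : (initSeg x n).take m = initSeg x m :=
  List.ext_getElem (by simp [h]) fun i _ _ => by simp

lemma initSeg_prefix_initSeg (x : ℕ → Bool) {m n : ℕ} (h : m ≤ n) :
    initSeg x m <+: initSeg x n :=
  take_initSeg x h ▸ List.take_prefix _ _

lemma initSeg_succ (x : ℕ → Bool) (n : ℕ) : initSeg x (n + 1) = initSeg x n ++ [x n] :=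
  List.ext_getElem (by simp) fun i h _ => by
    rcases Nat.lt_succ_iff_lt_or_eq.1 (by simpa using h) with hi | rfl
    · simp [List.getElem_append_left, hi]
    · simp

lemma initSeg_eq_initSeg_iff {x y : ℕ → Bool} {n : ℕ} :
    initSeg x n = initSeg y n ↔ ∀ i < n, x i = y i := by
  simp [initSeg, List.ofFn_inj, funext_iff, Fin.forall_iff]

lemma exists_initSeg_eq_of_ne {x y : ℕ → Bool} (h : x ≠ y) :
    ∃ m, initSeg x m = initSeg y m ∧ x m ≠ y m := by
  classical
  have hex : ∃ m, x m ≠ y m := by simpa [funext_iff] using h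
  refine ⟨Nat.find hex, initSeg_eq_initSeg_iff.2 fun i hi => ?_, Nat.find_spec hex⟩
  simpa using Nat.find_min hex hi

lemma initSeg_length_eq_of_comparable {P : Set (List Bool)} {t : List Bool}
    (hP : ∀ u ∈ P, u <+: t ∨ t <+: u) {x : ℕ → Bool} (hx : x ∈ branches P) :
    initSeg x t.length = t := by
  rcases hP _ (hx t.length) with h | h
  · exact h.eq_of_length (by simp)
  · exact (h.eq_of_length (by simp)).symm

lemma exists_initSeg_eq_of_chain {c : ℕ → List Bool} (hc : ∀ n, c n <+: c (n + 1))
    (hlen : ∀ n, n < (c n).length) : ∃ x, ∀ n, initSeg x (c n).length = c n := by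
  have hmono : ∀ {m n}, m ≤ n → c m <+: c n := fun h => by
    induction h with
    | refl => exact List.prefix_refl _
    | step _ ih => exact ih.trans (hc _)
  refine ⟨fun i => (c i)[i]'(hlen i), fun n => List.ext_getElem (by simp) fun i hi hin => ?_⟩
  rw [getElem_initSeg]
  rcases le_total i n with h | h
  · exact (hmono h).getElem (hlen i)
  · exact ((hmono h).getElem hin).symm

lemma mem_branches_iff {T : Set (List Bool)} {x : ℕ → Bool} :
    x ∈ branches T ↔ ∀ n, initSeg x n ∈ T :=
  Iff.rfl

lemma branches_mono {T Q : Set (List Bool)} (h : Q ⊆ T) : branches Q ⊆ branches T :=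
  fun _ hx n => h (hx n)

lemma branches_biUnion_subset {ι : Type*} {I : Set ι} (hI : I.Finite)
    {T : ι → Set (List Bool)} (hT : ∀ i ∈ I, ∀ t ∈ T i, ∀ n, t.take n ∈ T i) :
    branches (⋃ i ∈ I, T i) ⊆ ⋃ i ∈ I, branches (T i) := by
  intro x hx
  have hx' : ∀ n, ∃ i : I, initSeg x n ∈ T i := fun n => by
    simpa using mem_branches_iff.1 hx n
  choose g hg using hx'
  have := hI.to_subtype
  obtain ⟨i, hi⟩ := Finite.exists_infinite_fiber g
  refine mem_biUnion i.2 (mem_branches_iff.2 fun m => ?_)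
  obtain ⟨n, hn, hmn⟩ := (Set.infinite_coe_iff.1 hi).exists_gt m
  rw [← take_initSeg x hmn.le, ← show g n = i from hn]
  exact hT _ (g n).2 _ (hg n) m

def subtreeAt (T : Set (List Bool)) (t : List Bool) : Set (List Bool) :=
  {u | u ∈ T ∧ (u <+: t ∨ t <+: u)}

lemma subtreeAt_subset (T : Set (List Bool)) (t : List Bool) : subtreeAt T t ⊆ T :=
  fun _ h => h.1

noncomputable def splitNode (T : Set (List Bool)) (t : List Bool) : List Bool :=
  Classical.epsilon fun s => s ∈ T ∧ t <+: s ∧ ∀ b, s ++ [b] ∈ T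

noncomputable def splitChain (T : Set (List Bool)) (σ : ℕ → Bool) : ℕ → List Bool
  | 0 => splitNode T []
  | n + 1 => splitNode T (splitChain T σ n ++ [σ n])

lemma splitChain_congr (T : Set (List Bool)) {σ τ : ℕ → Bool} {n : ℕ}
    (h : ∀ i < n, σ i = τ i) : splitChain T σ n = splitChain T τ n := by
  induction n with
  | zero => rfl
  | succ n ih =>
    simp only [splitChain, ih fun i hi => h i (by omega), h n (by omega)]

namespace IsPerfectTree

variable {T : Set (List Bool)} (hT : IsPerfectTree T)
include hT

lemma mem_of_prefix {u t : List Bool} (h : u <+: t) (ht : t ∈ T) : u ∈ T := by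
  obtain ⟨s, rfl⟩ := h
  simpa using hT.2.1 _ ht u.length

lemma nil_mem : [] ∈ T :=
  hT.mem_of_prefix List.nil_prefix hT.1.some_mem

lemma subtreeAt {t : List Bool} (ht : t ∈ T) : IsPerfectTree (subtreeAt T t) := by
  refine ⟨⟨t, ht, Or.inl (List.prefix_refl t)⟩, ?_, ?_⟩
  · rintro u ⟨hu, hut⟩ n
    refine ⟨hT.2.1 u hu n, ?_⟩
    rcases hut with h | h
    · exact Or.inl ((List.take_prefix n u).trans h)
    · exact List.prefix_or_prefix_of_prefix (List.take_prefix n u) h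
  · rintro u ⟨hu, hut⟩
    obtain ⟨v, hv, huv, htv⟩ : ∃ v ∈ T, u <+: v ∧ t <+: v := by
      rcases hut with h | h
      · exact ⟨t, ht, h, List.prefix_refl t⟩
      · exact ⟨u, hu, List.prefix_refl u, h⟩
    obtain ⟨s, hs, hvs, hs0, hs1⟩ := hT.2.2 v hv
    have hts : t <+: s := htv.trans hvs
    exact ⟨s, ⟨hs, Or.inr hts⟩, huv.trans hvs, ⟨hs0, Or.inr (hts.trans (by simp))⟩,
      ⟨hs1, Or.inr (hts.trans (by simp))⟩⟩

lemma splitNode_spec {t : List Bool} (ht : t ∈ T) :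
    splitNode T t ∈ T ∧ t <+: splitNode T t ∧ ∀ b, splitNode T t ++ [b] ∈ T := by
  obtain ⟨s, hs, hts, h0, h1⟩ := hT.2.2 t ht
  exact Classical.epsilon_spec (p := fun s => s ∈ T ∧ t <+: s ∧ ∀ b, s ++ [b] ∈ T)
    ⟨s, hs, hts, fun b => by cases b <;> assumption⟩

lemma splitChain_spec (σ : ℕ → Bool) (n : ℕ) :
    splitChain T σ n ∈ T ∧ ∀ b, splitChain T σ n ++ [b] ∈ T := by
  induction n with
  | zero => exact ⟨(hT.splitNode_spec hT.nil_mem).1, (hT.splitNode_spec hT.nil_mem).2.2⟩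
  | succ n ih => exact ⟨(hT.splitNode_spec (ih.2 _)).1, (hT.splitNode_spec (ih.2 _)).2.2⟩

lemma splitChain_prefix_succ (σ : ℕ → Bool) (n : ℕ) :
    splitChain T σ n ++ [σ n] <+: splitChain T σ (n + 1) :=
  (hT.splitNode_spec ((hT.splitChain_spec σ n).2 _)).2.1

/-- The branches through the nodes `splitChain T σ n ++ [σ n]` form a Cantor set inside `[T]`. -/
theorem exists_injective_branches :
    ∃ g : (ℕ → Bool) → ℕ → Bool, Function.Injective g ∧ ∀ σ, g σ ∈ branches T := by
  have hlen : ∀ σ n, n < (splitChain T σ n ++ [σ n]).length := fun σ n => by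
    induction n with
    | zero => simp
    | succ n ih =>
      have := (hT.splitChain_prefix_succ σ n).length_le
      simp only [List.length_append, List.length_singleton] at ih this ⊢
      omega
  choose g hg using fun σ => exists_initSeg_eq_of_chain
    (fun n => (hT.splitChain_prefix_succ σ n).trans (List.prefix_append _ [σ (n + 1)]))
    (hlen σ)
  refine ⟨g, fun σ τ hστ => by_contra fun hne => ?_, fun σ => mem_branches_iff.2 fun m => ?_⟩
  · obtain ⟨m, hm, hne⟩ := exists_initSeg_eq_of_ne hne
    have hσ := hg σ m
    have hτ := hg τ m
    rw [hστ, splitChain_congr T (initSeg_eq_initSeg_iff.1 hm)] at hσ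
    simp only [List.length_append, List.length_singleton] at hσ hτ
    exact hne (by simpa [hσ] using hτ)
  · rw [← take_initSeg (g σ) (hlen σ m).le, hg σ m]
    exact hT.2.1 _ ((hT.splitChain_spec σ m).2 _) m

lemma branches_nonempty : (branches T).Nonempty :=
  let ⟨g, _, hg⟩ := hT.exists_injective_branches
  ⟨g fun _ => false, hg _⟩

lemma exists_mem_branches_ne (x : ℕ → Bool) : ∃ y ∈ branches T, y ≠ x := by
  obtain ⟨g, hg, hgT⟩ := hT.exists_injective_branches
  by_cases h : g (fun _ => false) = x
  · refine ⟨g fun _ => true, hgT _, h ▸ fun h' => ?_⟩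
    simpa using congrFun (hg h') 0
  · exact ⟨_, hgT _, h⟩

end IsPerfectTree

lemma exists_append_cons_of_ne {s t : List Bool} (hlen : s.length = t.length) (hne : s ≠ t) :
    ∃ s₁ t₁ r b, s = s₁ ++ b :: r ∧ t = t₁ ++ (!b) :: r := by
  induction s generalizing t with
  | nil => cases t <;> simp_all
  | cons a s ih =>
    obtain _ | ⟨c, t⟩ := t
    · simp at hlen
    · by_cases hst : s = t
      · subst hst
        have hc : c = !a := by cases a <;> cases c <;> simp_all
        exact ⟨[], [], s, a, rfl, by simp [hc]⟩
      · obtain ⟨s₁, t₁, r, b, rfl, rfl⟩ := ih (by simpa using hlen) hst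
        exact ⟨a :: s₁, c :: t₁, r, b, rfl, rfl⟩

section Fusion

/-- Child `b` of the split gets the stem `node ++ [xor bit b]`; `bit` is the direction in which
the branches of `trees false` leave `node`, which the construction does not control. -/
structure TreeSplit where
  trees : Bool → Set (List Bool)
  node : List Bool
  bit : Bool

instance : Nonempty TreeSplit := ⟨⟨fun _ => ∅, [], false⟩⟩

def TreeSplit.stem (r : TreeSplit) (b : Bool) : List Bool := r.node ++ [xor r.bit b]

def IsStemmed (P₀ P : Set (List Bool)) (t : List Bool) : Prop :=
  IsPerfectTree P ∧ P ⊆ P₀ ∧ t ∈ P ∧ ∀ u ∈ P, u <+: t ∨ t <+: u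

variable (Rel : ℕ → (Bool → Set (List Bool)) → Prop) (P₀ : Set (List Bool))

def IsSplit (k : ℕ) (P : Set (List Bool)) (t : List Bool) (r : TreeSplit) : Prop :=
  Rel k r.trees ∧ t <+: r.node ∧
    ∀ b, IsPerfectTree (r.trees b) ∧ r.trees b ⊆ P ∧ r.stem b ∈ r.trees b

/-- The address `b :: s` is the `b`-child of `s`, so addresses are read from the leaf up and
`s.length` is the level of `s`. -/
noncomputable def fusionScheme : List Bool → Set (List Bool) × List Bool
  | [] => (P₀, [])
  | b :: s =>
    let r := Classical.epsilon (IsSplit Rel s.length (fusionScheme s).1 (fusionScheme s).2)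
    (subtreeAt (r.trees b) (r.stem b), r.stem b)

noncomputable def schemeSplit (s : List Bool) : TreeSplit :=
  Classical.epsilon (IsSplit Rel s.length (fusionScheme Rel P₀ s).1 (fusionScheme Rel P₀ s).2)

def fusionTree : Set (List Bool) :=
  ⋂ k, ⋃ s ∈ {s : List Bool | s.length = k}, (fusionScheme Rel P₀ s).1

variable {Rel P₀}

lemma fusionScheme_cons (b : Bool) (s : List Bool) :
    fusionScheme Rel P₀ (b :: s) =
      (subtreeAt ((schemeSplit Rel P₀ s).trees b) ((schemeSplit Rel P₀ s).stem b),
        (schemeSplit Rel P₀ s).stem b) :=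
  rfl

lemma fusionScheme_cons_subset (b : Bool) (s : List Bool) :
    (fusionScheme Rel P₀ (b :: s)).1 ⊆ (schemeSplit Rel P₀ s).trees b :=
  subtreeAt_subset _ _

lemma mem_fusionTree_iff {u : List Bool} :
    u ∈ fusionTree Rel P₀ ↔ ∀ k, ∃ s : List Bool, s.length = k ∧ u ∈ (fusionScheme Rel P₀ s).1 := by
  simp [fusionTree]

lemma fusionTree_subset : fusionTree Rel P₀ ⊆ P₀ := fun u hu => by
  obtain ⟨s, hs, hu⟩ := mem_fusionTree_iff.1 hu 0
  rwa [List.length_eq_zero_iff.1 hs] at hu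

variable (hstep : ∀ k P, IsPerfectTree P → P ⊆ P₀ →
  ∃ Q : Bool → Set (List Bool), (∀ b, IsPerfectTree (Q b) ∧ Q b ⊆ P) ∧ Rel k Q)
include hstep

lemma exists_isSplit {P : Set (List Bool)} {t : List Bool} (h : IsStemmed P₀ P t) (k : ℕ) :
    ∃ r, IsSplit Rel k P t r := by
  obtain ⟨hP, hPP₀, -, ht⟩ := h
  obtain ⟨Q, hQ, hrel⟩ := hstep k P hP hPP₀
  obtain ⟨x, hx⟩ := (hQ false).1.branches_nonempty
  obtain ⟨y, hy, hyx⟩ := (hQ true).1.exists_mem_branches_ne x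
  obtain ⟨m, hm, hxy⟩ := exists_initSeg_eq_of_ne hyx.symm
  have hxt := initSeg_length_eq_of_comparable ht (branches_mono (hQ false).2 hx)
  have hyt := initSeg_length_eq_of_comparable ht (branches_mono (hQ true).2 hy)
  have htm : t.length ≤ m := by
    by_contra! h
    exact hxy (initSeg_eq_initSeg_iff.1 (hxt.trans hyt.symm) m h)
  refine ⟨⟨Q, initSeg x m, x m⟩, hrel, hxt ▸ initSeg_prefix_initSeg x htm,
    fun b => ⟨(hQ b).1, (hQ b).2, ?_⟩⟩
  have hyx' : y m = !x m := by revert hxy; cases x m <;> cases y m <;> simp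
  have hx' := mem_branches_iff.1 hx (m + 1)
  have hy' := mem_branches_iff.1 hy (m + 1)
  rw [initSeg_succ] at hx' hy'
  cases b
  · simpa [TreeSplit.stem] using hx'
  · simpa [TreeSplit.stem, hm, hyx'] using hy'

lemma isSplit_schemeSplit_of_isStemmed {s : List Bool}
    (h : IsStemmed P₀ (fusionScheme Rel P₀ s).1 (fusionScheme Rel P₀ s).2) :
    IsSplit Rel s.length (fusionScheme Rel P₀ s).1 (fusionScheme Rel P₀ s).2
      (schemeSplit Rel P₀ s) :=
  Classical.epsilon_spec (exists_isSplit hstep h s.length)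

lemma isStemmed_fusionScheme (hP₀ : IsPerfectTree P₀) (s : List Bool) :
    IsStemmed P₀ (fusionScheme Rel P₀ s).1 (fusionScheme Rel P₀ s).2 := by
  induction s with
  | nil => exact ⟨hP₀, subset_rfl, hP₀.nil_mem, fun _ _ => Or.inr List.nil_prefix⟩
  | cons b s ih =>
    obtain ⟨hQ, hQP, hstem⟩ := (isSplit_schemeSplit_of_isStemmed hstep ih).2.2 b
    exact ⟨hQ.subtreeAt hstem, (subtreeAt_subset _ _).trans (hQP.trans ih.2.1),
      ⟨hstem, Or.inl (List.prefix_refl _)⟩, fun _ hu => hu.2⟩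

variable (hP₀ : IsPerfectTree P₀)
include hP₀

lemma isSplit_schemeSplit (s : List Bool) :
    IsSplit Rel s.length (fusionScheme Rel P₀ s).1 (fusionScheme Rel P₀ s).2
      (schemeSplit Rel P₀ s) :=
  isSplit_schemeSplit_of_isStemmed hstep (isStemmed_fusionScheme hstep hP₀ s)

lemma fusionScheme_append_subset (s₁ s : List Bool) :
    (fusionScheme Rel P₀ (s₁ ++ s)).1 ⊆ (fusionScheme Rel P₀ s).1 := by
  induction s₁ with
  | nil => exact subset_rfl
  | cons b s₁ ih =>
    exact (fusionScheme_cons_subset b _).trans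
      (((isSplit_schemeSplit hstep hP₀ _).2.2 b).2.1.trans ih)

lemma stem_prefix_stem_append (s₁ s : List Bool) :
    (fusionScheme Rel P₀ s).2 <+: (fusionScheme Rel P₀ (s₁ ++ s)).2 := by
  induction s₁ with
  | nil => exact List.prefix_refl _
  | cons b s₁ ih =>
    exact ih.trans (((isSplit_schemeSplit hstep hP₀ _).2.1).trans (List.prefix_append _ _))

lemma length_le_length_stem (s : List Bool) : s.length ≤ (fusionScheme Rel P₀ s).2.length := by
  induction s with
  | nil => simp
  | cons b s ih =>
    have := ((isSplit_schemeSplit hstep hP₀ s).2.1).length_le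
    simp only [fusionScheme_cons, TreeSplit.stem, List.length_append, List.length_cons] at this ⊢
    omega

lemma stem_mem_fusionTree (s : List Bool) : (fusionScheme Rel P₀ s).2 ∈ fusionTree Rel P₀ := by
  refine mem_fusionTree_iff.2 fun k => ?_
  set s' := List.replicate k false ++ s
  have hk : k ≤ s'.length := by simp [s']
  refine ⟨s'.drop (s'.length - k), by simp; omega, ?_⟩
  refine fusionScheme_append_subset hstep hP₀ (s'.take (s'.length - k)) _ ?_
  rw [List.take_append_drop]
  exact (isStemmed_fusionScheme hstep hP₀ s').1.mem_of_prefix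
    (stem_prefix_stem_append hstep hP₀ _ s) (isStemmed_fusionScheme hstep hP₀ s').2.2.1

lemma mem_fusionTree_of_prefix {u v : List Bool} (h : u <+: v) (hv : v ∈ fusionTree Rel P₀) :
    u ∈ fusionTree Rel P₀ :=
  mem_fusionTree_iff.2 fun k =>
    let ⟨s, hs, hvs⟩ := mem_fusionTree_iff.1 hv k
    ⟨s, hs, (isStemmed_fusionScheme hstep hP₀ s).1.mem_of_prefix h hvs⟩

theorem isPerfectTree_fusionTree : IsPerfectTree (fusionTree Rel P₀) := by
  refine ⟨⟨[], stem_mem_fusionTree hstep hP₀ []⟩,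
    fun t ht n => mem_fusionTree_of_prefix hstep hP₀ (List.take_prefix n t) ht, fun t ht => ?_⟩
  obtain ⟨s, hs, hts⟩ := mem_fusionTree_iff.1 ht (t.length + 1)
  have hlen := length_le_length_stem hstep hP₀ s
  have ht_stem : t <+: (fusionScheme Rel P₀ s).2 :=
    ((isStemmed_fusionScheme hstep hP₀ s).2.2.2 t hts).resolve_right fun h => by
      have := h.length_le
      omega
  set r := schemeSplit Rel P₀ s
  have hchild : ∀ b, r.node ++ [b] ∈ fusionTree Rel P₀ := fun b => by
    simpa [fusionScheme_cons, TreeSplit.stem, r] using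
      stem_mem_fusionTree hstep hP₀ (xor r.bit b :: s)
  exact ⟨r.node, mem_fusionTree_of_prefix hstep hP₀ (List.prefix_append _ _) (hchild false),
    ht_stem.trans (isSplit_schemeSplit hstep hP₀ s).2.1, hchild false, hchild true⟩

lemma exists_mem_branches_fusionScheme {x : ℕ → Bool} (hx : x ∈ branches (fusionTree Rel P₀))
    (k : ℕ) : ∃ s : List Bool, s.length = k ∧ x ∈ branches (fusionScheme Rel P₀ s).1 := by
  simpa using branches_biUnion_subset (List.finite_length_eq Bool k)
    (fun s _ => (isStemmed_fusionScheme hstep hP₀ s).1.2.1) (branches_mono (iInter_subset _ k) hx)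

theorem exists_rel_of_mem_branches_fusionTree {x : ℕ → Bool}
    (hx : x ∈ branches (fusionTree Rel P₀)) (k : ℕ) :
    ∃ Q, Rel k Q ∧ ∃ b, x ∈ branches (Q b) := by
  obtain ⟨_ | ⟨b, s⟩, hs, hxs⟩ := exists_mem_branches_fusionScheme hstep hP₀ hx (k + 1)
  · simp at hs
  · obtain rfl : s.length = k := by simpa using hs
    exact ⟨_, (isSplit_schemeSplit hstep hP₀ s).1, b,
      branches_mono (fusionScheme_cons_subset b s) hxs⟩

theorem exists_rel_separating {x y : ℕ → Bool} (hx : x ∈ branches (fusionTree Rel P₀))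
    (hy : y ∈ branches (fusionTree Rel P₀)) (hxy : x ≠ y) :
    ∃ k Q, Rel k Q ∧ ∃ b, x ∈ branches (Q b) ∧ y ∈ branches (Q (!b)) := by
  obtain ⟨m, -, hm⟩ := exists_initSeg_eq_of_ne hxy
  obtain ⟨s, hs, hxs⟩ := exists_mem_branches_fusionScheme hstep hP₀ hx (m + 1)
  obtain ⟨t, ht, hyt⟩ := exists_mem_branches_fusionScheme hstep hP₀ hy (m + 1)
  have hst : s ≠ t := by
    rintro rfl
    have hcomp := (isStemmed_fusionScheme hstep hP₀ s).2.2.2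
    have hlen := length_le_length_stem hstep hP₀ s
    have hxy := (initSeg_length_eq_of_comparable hcomp hxs).trans
      (initSeg_length_eq_of_comparable hcomp hyt).symm
    exact hm (initSeg_eq_initSeg_iff.1 hxy m (by omega))
  obtain ⟨s₁, t₁, r, b, rfl, rfl⟩ := exists_append_cons_of_ne (hs.trans ht.symm) hst
  refine ⟨r.length, _, (isSplit_schemeSplit hstep hP₀ r).1, b, ?_, ?_⟩
  · exact branches_mono ((fusionScheme_append_subset hstep hP₀ s₁ _).trans
      (fusionScheme_cons_subset b r)) hxs
  · exact branches_mono ((fusionScheme_append_subset hstep hP₀ t₁ _).trans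
      (fusionScheme_cons_subset (!b) r)) hyt

end Fusion

def MarczewskiSOn (Q : Set (List Bool)) (X : Set (ℕ → Bool)) : Prop :=
  ∀ P, IsPerfectTree P → P ⊆ Q →
    ∃ P', IsPerfectTree P' ∧ P' ⊆ P ∧ (branches P' ⊆ X ∨ branches P' ∩ X = ∅)

def IsDenseBelow (P : Set (List Bool)) (X : Set (ℕ → Bool)) : Prop :=
  ∀ P', IsPerfectTree P' → P' ⊆ P → ∃ P'', IsPerfectTree P'' ∧ P'' ⊆ P' ∧ branches P'' ⊆ X

lemma MarczewskiSOn.mono {Q R : Set (List Bool)} {X : Set (ℕ → Bool)} (h : MarczewskiSOn Q X)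
    (hRQ : R ⊆ Q) : MarczewskiSOn R X :=
  fun P hP hPR => h P hP (hPR.trans hRQ)

lemma MarczewskiS.marczewskiSOn_of_inter {A X : Set (ℕ → Bool)} (h : MarczewskiS (A ∩ X))
    {Q : Set (List Bool)} (hQA : branches Q ⊆ A) : MarczewskiSOn Q X := by
  intro P hP hPQ
  obtain ⟨P', hP', hP'P, hsub | hdisj⟩ := h P hP
  · exact ⟨P', hP', hP'P, Or.inl (hsub.trans inter_subset_right)⟩
  · have hP'A := (branches_mono (hP'P.trans hPQ)).trans hQA
    exact ⟨P', hP', hP'P, Or.inr (eq_empty_of_subset_empty fun x ⟨hxP, hxX⟩ =>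
      hdisj.subset ⟨hxP, hP'A hxP, hxX⟩)⟩

lemma MarczewskiSOn.exists_const {Q P : Set (List Bool)} {p : (ℕ → Bool) → Bool}
    (h : MarczewskiSOn Q {x | p x = true}) (hP : IsPerfectTree P) (hPQ : P ⊆ Q) :
    ∃ P', IsPerfectTree P' ∧ P' ⊆ P ∧ ∃ b, ∀ x ∈ branches P', p x = b := by
  obtain ⟨P', hP', hP'P, hsub | hdisj⟩ := h P hP hPQ
  · exact ⟨P', hP', hP'P, true, hsub⟩
  · refine ⟨P', hP', hP'P, false, fun x hx => ?_⟩
    simpa using fun h => hdisj.subset ⟨hx, h⟩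

theorem exists_const_on_branches_of_isDenseBelow {β : Type*} {f : (ℕ → Bool) → ℕ → β}
    {P : Set (List Bool)} (hP : IsPerfectTree P)
    (hdense : ∀ n, ∃ b, IsDenseBelow P {x | f x n = b}) :
    ∃ R, IsPerfectTree R ∧ R ⊆ P ∧ ∃ c, ∀ x ∈ branches R, f x = c := by
  choose c hc using hdense
  have hstep : ∀ k P', IsPerfectTree P' → P' ⊆ P → ∃ Q : Bool → Set (List Bool),
      (∀ b, IsPerfectTree (Q b) ∧ Q b ⊆ P') ∧ ∀ b, ∀ x ∈ branches (Q b), f x k = c k :=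
    fun k P' hP' hP'P =>
      let ⟨P'', hP'', hP''P', hconst⟩ := hc k P' hP' hP'P
      ⟨fun _ => P'', fun _ => ⟨hP'', hP''P'⟩, fun _ => hconst⟩
  refine ⟨_, isPerfectTree_fusionTree hstep hP, fusionTree_subset, c,
    fun x hx => funext fun k => ?_⟩
  obtain ⟨Q, hQ, b, hxQ⟩ := exists_rel_of_mem_branches_fusionTree hstep hP hx k
  exact hQ b x hxQ

theorem exists_injOn_branches {β : Type*} {f : (ℕ → Bool) → β} {Q : Set (List Bool)}
    (hQ : IsPerfectTree Q)
    (hsplit : ∀ P, IsPerfectTree P → P ⊆ Q → ∃ W : Bool → Set (List Bool),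
      (∀ b, IsPerfectTree (W b) ∧ W b ⊆ P) ∧
        ∀ x ∈ branches (W false), ∀ y ∈ branches (W true), f x ≠ f y) :
    ∃ R, IsPerfectTree R ∧ R ⊆ Q ∧ InjOn f (branches R) := by
  refine ⟨_, isPerfectTree_fusionTree (fun _ => hsplit) hQ, fusionTree_subset,
    fun x hx y hy hfxy => by_contra fun hxy => ?_⟩
  obtain ⟨k, W, hW, b, hxW, hyW⟩ := exists_rel_separating (fun _ => hsplit) hQ hx hy hxy
  cases b
  · exact hW x hxW y hyW hfxy
  · exact hW y hyW x hxW hfxy.symm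

/-- If `P` admits no dense choice of the `n`-th coordinate, then below `P` there are perfect
trees on which it is constantly `false` and constantly `true`; fusing such splittings makes `f`
injective. Otherwise fusion makes `f` constant. -/
theorem exists_const_or_injOn_branches {f : (ℕ → Bool) → ℕ → Bool} {Q : Set (List Bool)}
    (hQ : IsPerfectTree Q) (hf : ∀ n, MarczewskiSOn Q {x | f x n = true}) :
    ∃ R, IsPerfectTree R ∧ R ⊆ Q ∧
      ((∃ c, ∀ x ∈ branches R, f x = c) ∨ InjOn f (branches R)) := by
  by_cases hdense : ∃ P, IsPerfectTree P ∧ P ⊆ Q ∧ ∀ n, ∃ b, IsDenseBelow P {x | f x n = b}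
  · obtain ⟨P, hP, hPQ, hdense⟩ := hdense
    obtain ⟨R, hR, hRP, hc⟩ := exists_const_on_branches_of_isDenseBelow hP hdense
    exact ⟨R, hR, hRP.trans hPQ, Or.inl hc⟩
  simp only [IsDenseBelow, not_exists, not_and, not_forall] at hdense
  refine (exists_injOn_branches hQ fun P hP hPQ => ?_).imp
    fun R ⟨hR, hRQ, hinj⟩ => ⟨hR, hRQ, Or.inr hinj⟩
  obtain ⟨n, hn⟩ := hdense P hP hPQ
  have hW : ∀ b, ∃ W, IsPerfectTree W ∧ W ⊆ P ∧ ∀ x ∈ branches W, f x n = !b := fun b => by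
    obtain ⟨P', hP', hP'P, hnot⟩ := hn b
    obtain ⟨W, hW, hWP', c, hc⟩ := (hf n).exists_const hP' (hP'P.trans hPQ)
    have hcb : c ≠ b := fun hcb => hnot W hW hWP' (hcb ▸ hc)
    exact ⟨W, hW, hWP'.trans hP'P, by simpa [Bool.eq_not_of_ne hcb] using hc⟩
  choose W hW using hW
  refine ⟨fun b => W (!b), fun b => ⟨(hW _).1, (hW _).2.1⟩, fun x hx y hy hxy => ?_⟩
  have := congrFun hxy n
  rw [(hW _).2.2 x hx, (hW _).2.2 y hy] at this
  simp at this

section Bernstein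

open Cardinal

lemma exists_pair_mem_sdiff {α : Type*} {Y E : Set α} (hE : #E < #Y) (hY : ℵ₀ ≤ #Y) :
    ∃ a ∈ Y, ∃ b ∈ Y, a ≠ b ∧ a ∉ E ∧ b ∉ E := by
  obtain ⟨a, haY, haE⟩ := sdiff_nonempty_of_mk_lt_mk hE
  have hEa : #(E ∪ {a} : Set α) < #Y := (mk_union_le _ _).trans_lt
    (add_lt_of_lt hY hE (by simpa using one_lt_aleph0.trans_le hY))
  obtain ⟨b, hbY, hb⟩ := sdiff_nonempty_of_mk_lt_mk hEa
  simp only [mem_union, mem_singleton_iff, not_or] at hb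
  exact ⟨a, haY, b, hbY, Ne.symm hb.2, haE, hb.1⟩

/-- Bernstein's construction: along a well-order of `ι` of type `#ι` every stage has fewer than
`#ι` predecessors, so two fresh points of `Y i` can always be chosen, one for `S` and one
for its complement. -/
theorem exists_inter_nonempty_and_sdiff_nonempty {α ι : Type u} (Y : ι → Set α) (hι : ∀ i, #ι ≤ #(Y i))
    (hY : ∀ i, ℵ₀ ≤ #(Y i)) : ∃ S : Set α, ∀ i, (S ∩ Y i).Nonempty ∧ (Y i \ S).Nonempty := by
  obtain ⟨r, hr, hord⟩ := Cardinal.exists_ord_eq ι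
  have hsmall : ∀ i, #{j // r j i} < #ι := fun i =>
    Ordinal.card_typein (r := r) i ▸ card_typein_lt i hord
  let used (i : ι) (prev : ∀ j, r j i → α × α) : Set α :=
    range (fun j : {j // r j i} => (prev j j.2).1) ∪ range (fun j : {j // r j i} => (prev j j.2).2)
  have hfresh : ∀ i prev, ∃ p : α × α,
      p.1 ∈ Y i ∧ p.2 ∈ Y i ∧ p.1 ≠ p.2 ∧ p.1 ∉ used i prev ∧ p.2 ∉ used i prev := by
    intro i prev
    have hlt : ∀ g : {j // r j i} → α, #(range g) < #(Y i) := fun g =>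
      mk_range_le.trans_lt ((hsmall i).trans_le (hι i))
    obtain ⟨a, ha, b, hb, hab, haE, hbE⟩ :=
      exists_pair_mem_sdiff ((mk_union_le _ _).trans_lt (add_lt_of_lt (hY i) (hlt _) (hlt _)))
        (hY i)
    exact ⟨(a, b), ha, hb, hab, haE, hbE⟩
  choose F hF using hfresh
  let p := hr.wf.fix F
  have hp : ∀ i, (p i).1 ∈ Y i ∧ (p i).2 ∈ Y i ∧ (p i).1 ≠ (p i).2 ∧
      (p i).1 ∉ used i (fun j _ => p j) ∧ (p i).2 ∉ used i (fun j _ => p j) := fun i => by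
    rw [show p i = F i (fun j _ => p j) from hr.wf.fix_eq F i]
    exact hF i _
  refine ⟨range fun i => (p i).1, fun i => ⟨⟨_, ⟨i, rfl⟩, (hp i).1⟩, ⟨_, (hp i).2.1, ?_⟩⟩⟩
  rintro ⟨j, hj⟩
  rcases trichotomous_of r j i with h | rfl | h
  · exact (hp i).2.2.2.2 (Or.inl ⟨⟨j, h⟩, hj⟩)
  · exact (hp j).2.2.1 hj
  · exact (hp j).2.2.2.1 (Or.inr ⟨⟨i, h⟩, hj.symm⟩)

lemma IsPerfectTree.mk_le_mk_branches {T : Set (List Bool)} (hT : IsPerfectTree T) :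
    #(ℕ → Bool) ≤ #(branches T) :=
  let ⟨g, hg, hgT⟩ := hT.exists_injective_branches
  mk_le_of_injective (f := fun σ => (⟨g σ, hgT σ⟩ : branches T))
    fun _ _ h => hg (congrArg Subtype.val h)

theorem exists_bernstein_set : ∃ S : Set (ℕ → Bool), ∀ P, IsPerfectTree P →
    (S ∩ branches P).Nonempty ∧ (branches P \ S).Nonempty := by
  have hcard : #(Set (List Bool)) = #(ℕ → Bool) := by
    rw [mk_set, ← power_def, mk_bool, mk_nat, mk_eq_aleph0 (List Bool)]
  obtain ⟨S, hS⟩ := exists_inter_nonempty_and_sdiff_nonempty (ι := {P : Set (List Bool) // IsPerfectTree P})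
    (fun P => branches P.1)
    (fun P => (mk_subtype_le _).trans (hcard.trans_le P.2.mk_le_mk_branches))
    (fun P => (aleph0_le_mk _).trans P.2.mk_le_mk_branches)
  exact ⟨S, fun P hP => hS ⟨P, hP⟩⟩

end Bernstein

lemma IsPerfectTree.exists_not_marczewskiSOn {β : Type*} {f : (ℕ → Bool) → β}
    {R : Set (List Bool)} (hR : IsPerfectTree R) (hinj : InjOn f (branches R)) :
    ∃ B, ¬ MarczewskiSOn R (f ⁻¹' B) := by
  obtain ⟨S, hS⟩ := exists_bernstein_set
  refine ⟨f '' (S ∩ branches R), fun h => ?_⟩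
  obtain ⟨P, hP, hPR, hsub | hdisj⟩ := h R hR subset_rfl
  · obtain ⟨y, hyP, hyS⟩ := (hS P hP).2
    obtain ⟨x, ⟨hxS, hxR⟩, hxy⟩ := hsub hyP
    exact hyS (hinj hxR (branches_mono hPR hyP) hxy ▸ hxS)
  · obtain ⟨x, hxS, hxP⟩ := (hS P hP).1
    exact hdisj.subset ⟨hxP, x, ⟨hxS, branches_mono hPR hxP⟩, rfl⟩

lemma S0Set.not_branches_subset {F : Set (ℕ → Bool)} (hF : S0Set F) {R : Set (List Bool)}
    (hR : IsPerfectTree R) : ¬ branches R ⊆ F := fun hRF => by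
  obtain ⟨P, hP, hPR, hPF⟩ := hF R hR
  obtain ⟨x, hx⟩ := hP.branches_nonempty
  exact hPF.subset ⟨hx, hRF (branches_mono hPR hx)⟩

lemma MarczewskiS.exists_branches_subset {A : Set (ℕ → Bool)} (hs : MarczewskiS A)
    (hA : ¬ S0Set A) : ∃ Q, IsPerfectTree Q ∧ branches Q ⊆ A := by
  simp only [S0Set, not_forall, not_exists, not_and] at hA
  obtain ⟨T, hT, hTA⟩ := hA
  obtain ⟨Q, hQ, hQT, hsub | hdisj⟩ := hs T hT
  · exact ⟨Q, hQ, hsub⟩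
  · exact (hTA Q hQ hQT hdisj).elim

lemma exists_fiber_mem_of_pairwise_disjoint {α : Type*} [Nonempty α] {A : Set α}
    {𝓕 : Set (Set α)} (hU : ⋃₀ 𝓕 = A) (hdisj : ∀ F ∈ 𝓕, ∀ G ∈ 𝓕, F ≠ G → Disjoint F G) :
    ∃ f : α → α, ∀ x ∈ A, A ∩ f ⁻¹' {f x} ∈ 𝓕 := by
  have hcell : ∀ x ∈ A, ∃ F ∈ 𝓕, x ∈ F := fun x hx => by rwa [← hU] at hx
  choose! cell hcell𝓕 hxcell using hcell
  have huniq : ∀ x ∈ A, ∀ F ∈ 𝓕, ∀ y ∈ F, y ∈ cell x → F = cell x :=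
    fun x hx F hF y hyF hyx => by_contra fun hne =>
      Set.disjoint_left.1 (hdisj F hF _ (hcell𝓕 x hx) hne) hyF hyx
  have hrep : ∀ x ∈ A, Classical.epsilon (· ∈ cell x) ∈ cell x :=
    fun x hx => Classical.epsilon_spec ⟨x, hxcell x hx⟩
  refine ⟨fun x => Classical.epsilon (· ∈ cell x), fun x hx => ?_⟩
  convert hcell𝓕 x hx using 1
  ext y
  constructor
  · rintro ⟨hy, hxy⟩
    have hxy : Classical.epsilon (· ∈ cell y) = Classical.epsilon (· ∈ cell x) := hxy
    have hyx : cell y = cell x := huniq x hx _ (hcell𝓕 y hy) _ (hrep y hy) (hxy ▸ hrep x hx)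
    exact hyx ▸ hxcell y hy
  · intro hy
    have hyA : y ∈ A := hU ▸ ⟨_, hcell𝓕 x hx, hy⟩
    have hyx : cell y = cell x := huniq x hx _ (hcell𝓕 y hyA) y (hxcell y hyA) hy
    exact ⟨hyA, by simp [hyx]⟩

lemma exists_subfamily_eq_inter_preimage {α β : Type*} {A : Set α} {𝓕 : Set (Set α)}
    {f : α → β} (hf : ∀ x ∈ A, A ∩ f ⁻¹' {f x} ∈ 𝓕) (B : Set β) :
    ∃ 𝓕' ⊆ 𝓕, ⋃₀ 𝓕' = A ∩ f ⁻¹' B := by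
  refine ⟨(fun x => A ∩ f ⁻¹' {f x}) '' (A ∩ f ⁻¹' B), ?_, ?_⟩
  · rintro _ ⟨x, hx, rfl⟩
    exact hf x hx.1
  · ext y
    constructor
    · rintro ⟨_, ⟨x, hx, rfl⟩, hyA, hyx⟩
      exact ⟨hyA, show f y ∈ B from (mem_singleton_iff.1 hyx).symm ▸ hx.2⟩
    · rintro ⟨hyA, hyB⟩
      exact ⟨_, ⟨y, ⟨hyA, hyB⟩, rfl⟩, hyA, rfl⟩

/-- No subset of `2^ω` which is not an (s⁰)-set admits a Kuratowski partition. -/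
theorem no_kuratowski_partition_sacks (A : Set (ℕ → Bool)) (hA : ¬ S0Set A) :
    ¬ ∃ 𝓕 : Set (Set (ℕ → Bool)),
        ⋃₀ 𝓕 = A ∧
        (∀ F ∈ 𝓕, ∀ G ∈ 𝓕, F ≠ G → Disjoint F G) ∧
        (∀ F ∈ 𝓕, S0Set F) ∧
        (∀ 𝓕' ⊆ 𝓕, MarczewskiS (⋃₀ 𝓕')) := by
  rintro ⟨𝓕, hU, hdisj, hs0, hs⟩
  obtain ⟨Q, hQ, hQA⟩ := (hU ▸ hs 𝓕 subset_rfl).exists_branches_subset hA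
  obtain ⟨f, hf⟩ := exists_fiber_mem_of_pairwise_disjoint hU hdisj
  have hmeas : ∀ B, MarczewskiSOn Q (f ⁻¹' B) := fun B =>
    let ⟨𝓕', h𝓕', hU'⟩ := exists_subfamily_eq_inter_preimage hf B
    (hU' ▸ hs 𝓕' h𝓕').marczewskiSOn_of_inter hQA
  obtain ⟨R, hR, hRQ, ⟨c, hc⟩ | hinj⟩ :=
    exists_const_or_injOn_branches hQ fun n => hmeas {z | z n = true}
  · obtain ⟨x₀, hx₀⟩ := hR.branches_nonempty
    have hRA : branches R ⊆ A := (branches_mono hRQ).trans hQA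
    refine (hs0 _ (hf x₀ (hRA hx₀))).not_branches_subset hR fun x hx => ⟨hRA hx, ?_⟩
    exact (hc x hx).trans (hc x₀ hx₀).symm
  · obtain ⟨B, hB⟩ := hR.exists_not_marczewskiSOn hinj
    exact hB ((hmeas B).mono hRQ)
end

section
/- No open dense set M ⊆ [ω]^ω (in the Ellentuck topology) that is not Ramsey null admits a Kuratowski partition; i.e., there is no partition F of M into Ramsey null sets such that ⋃F' is completely Ramsey for every subfamily F' ⊆ F. -/
/-!
If `𝓕` were a Kuratowski partition of `M`, coding each piece by the characteristic function of a
chosen element gives a map `c : M → (ℕ → Bool)` whose preimages are all completely Ramsey and whose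
fibres are all Ramsey null. Being completely Ramsey but not Ramsey null, `M` contains a cube
`[a, A]`, and a fusion argument shrinks it to a cube `[a, D]` on which `c` is the restriction of a
continuous self-map of Cantor space. Countable unions of Ramsey null sets are Ramsey null, so `c`
takes uncountably many values on every subcube `[a, B]` of `[a, D]`; these values fill a compact
set up to countably many points, hence there are continuum many of them. A Bernstein set `T` for
these continuum many images makes `M ∩ c⁻¹ T` fail to be completely Ramsey.
-/

open Set

/-- The Ellentuck basic set `[a, A]` of infinite sets `B` with `a ⊆ B ⊆ a ∪ A`. -/
def EllSet (a : Finset ℕ) (A : Set ℕ) : Set (Set ℕ) :=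
  {B | B.Infinite ∧ ↑a ⊆ B ∧ B ⊆ ↑a ∪ A}

/-- `M` is completely Ramsey. -/
def CRSet (M : Set (Set ℕ)) : Prop :=
  ∀ (a : Finset ℕ) (A : Set ℕ), A.Infinite →
    ∃ B ⊆ A, B.Infinite ∧ (EllSet a B ⊆ M ∨ EllSet a B ∩ M = ∅)

/-- `M` is Ramsey null. -/
def RamseyNull (M : Set (Set ℕ)) : Prop :=
  ∀ (a : Finset ℕ) (A : Set ℕ), A.Infinite →
    ∃ B ⊆ A, B.Infinite ∧ EllSet a B ∩ M = ∅

/-- `M` is open in the Ellentuck topology. -/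
def EllOpen (M : Set (Set ℕ)) : Prop :=
  M ⊆ {A | A.Infinite} ∧
    ∀ B ∈ M, ∃ (a : Finset ℕ) (A : Set ℕ), A.Infinite ∧ B ∈ EllSet a A ∧ EllSet a A ⊆ M

/-- `M` is dense in the Ellentuck topology. -/
def EllDense (M : Set (Set ℕ)) : Prop :=
  ∀ (a : Finset ℕ) (A : Set ℕ), A.Infinite → (EllSet a A).Nonempty →
    (EllSet a A ∩ M).Nonempty

universe u

open Cardinal TopologicalSpace

lemma ellSet_mono {a : Finset ℕ} {A B : Set ℕ} (h : B ⊆ A) : EllSet a B ⊆ EllSet a A :=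
  fun _ ⟨hX, haX, hXB⟩ => ⟨hX, haX, hXB.trans (union_subset_union_right _ h)⟩

lemma union_mem_ellSet (a : Finset ℕ) {A : Set ℕ} (hA : A.Infinite) : ↑a ∪ A ∈ EllSet a A :=
  ⟨hA.mono subset_union_right, subset_union_left, subset_rfl⟩

lemma RamseyNull.mono {V W : Set (Set ℕ)} (hW : RamseyNull W) (h : V ⊆ W) : RamseyNull V := by
  intro a A hA
  obtain ⟨B, hBA, hB, hBW⟩ := hW a A hA
  exact ⟨B, hBA, hB, subset_eq_empty (inter_subset_inter_right _ h) hBW⟩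

lemma not_ramseyNull_ellSet (a : Finset ℕ) {A : Set ℕ} (hA : A.Infinite) :
    ¬ RamseyNull (EllSet a A) := by
  intro h
  obtain ⟨B, hBA, hB, hdisj⟩ := h a A hA
  exact hdisj.subset ⟨union_mem_ellSet a hB, ellSet_mono hBA (union_mem_ellSet a hB)⟩

lemma CRSet.exists_ellSet_subset {M : Set (Set ℕ)} (hM : CRSet M) (hnull : ¬ RamseyNull M) :
    ∃ (a : Finset ℕ) (A : Set ℕ), A.Infinite ∧ EllSet a A ⊆ M := by
  simp only [RamseyNull, not_forall, not_exists, not_and] at hnull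
  obtain ⟨a, A, hA, hmeets⟩ := hnull
  obtain ⟨B, hBA, hB, hBM | hBM⟩ := hM a A hA
  · exact ⟨a, B, hB, hBM⟩
  · exact absurd hBM (hmeets B hBA hB)

lemma exists_infinite_subset_forall_mem {α ι : Type*} (Q : ι → Set α → Prop)
    (hmono : ∀ i ⦃B C : Set α⦄, C ⊆ B → Q i B → Q i C)
    (hdense : ∀ i (A : Set α), A.Infinite → ∃ B ⊆ A, B.Infinite ∧ Q i B)
    (s : Finset ι) {A : Set α} (hA : A.Infinite) :
    ∃ B ⊆ A, B.Infinite ∧ ∀ i ∈ s, Q i B := by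
  classical
  induction s using Finset.induction_on with
  | empty => exact ⟨A, subset_rfl, hA, by simp⟩
  | insert i s _ ih =>
    obtain ⟨B, hBA, hB, hQB⟩ := ih
    obtain ⟨C, hCB, hC, hQC⟩ := hdense i B hB
    exact ⟨C, hCB.trans hBA, hC, Finset.forall_mem_insert _ _ _ |>.2
      ⟨hQC, fun j hj => hmono j hCB (hQB j hj)⟩⟩

open Classical in
lemma slice_subset_ellSet {a : Finset ℕ} {D C X : Set ℕ} {n : ℕ} (hDC : D \ Iio n ⊆ C) :
    {Y ∈ EllSet a D | ∀ k < n, k ∈ Y ↔ k ∈ X} ⊆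
      EllSet (a ∪ (Finset.range n).filter (· ∈ X)) C := by
  rintro Y ⟨⟨hY, haY, hYD⟩, hYX⟩
  simp only [EllSet, Finset.coe_union, Finset.coe_filter, Finset.mem_range, mem_ofPred_eq]
  refine ⟨hY, union_subset haY fun k hk => (hYX k hk.1).2 hk.2, fun k hk => ?_⟩
  rcases hYD hk with hka | hkD
  · exact Or.inl (Or.inl hka)
  · by_cases hkn : k < n
    · exact Or.inl (Or.inr ⟨hkn, (hYX k hkn).1 hk⟩)
    · exact Or.inr (hDC ⟨hkD, hkn⟩)

theorem ellSet_fusion (P : ℕ → Set (Set ℕ) → Prop)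
    (hmono : ∀ m ⦃V W : Set (Set ℕ)⦄, W ⊆ V → P m V → P m W)
    (hdense : ∀ m a (A : Set ℕ), A.Infinite → ∃ B ⊆ A, B.Infinite ∧ P m (EllSet a B))
    (a : Finset ℕ) {A : Set ℕ} (hA : A.Infinite) :
    ∃ D ⊆ A, D.Infinite ∧
      ∀ m, ∃ n, ∀ X ∈ EllSet a D, P m {Y ∈ EllSet a D | ∀ k < n, k ∈ Y ↔ k ∈ X} := by
  classical
  have step : ∀ (m : ℕ) (B : {B : Set ℕ // B.Infinite}), ∃ C : {C : Set ℕ // C.Infinite},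
      C.1 ⊆ B.1 ∩ Ioi (sInf B.1) ∧
        ∀ s ∈ (Finset.range (sInf B.1 + 1)).powerset, P m (EllSet (a ∪ s) C.1) := by
    rintro m ⟨B, hB⟩
    have hB' : (B ∩ Ioi (sInf B)).Infinite :=
      (hB.sdiff (finite_Iic _)).mono fun y hy => ⟨hy.1, not_le.1 (mem_Iic.not.1 hy.2)⟩
    obtain ⟨C, hCB, hC, hPC⟩ :=
      exists_infinite_subset_forall_mem (fun s C => P m (EllSet (a ∪ s) C))
        (fun s _ _ h => hmono m (ellSet_mono h)) (fun s => hdense m (a ∪ s)) _ hB'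
    exact ⟨⟨C, hC⟩, hCB, hPC⟩
  -- `x m = min (B m)` and `B (m + 1)` lies above `x m`, so `range x \ [0, x m] ⊆ B (m + 1)`: the
  -- slice of `[a, range x]` by a trace on `[0, x m]` lies in a `P m`-cube over `B (m + 1)`.
  choose next hnext_sub hnext_P using step
  let B : ℕ → {B : Set ℕ // B.Infinite} := fun m => Nat.rec ⟨A, hA⟩ next m
  let x : ℕ → ℕ := fun m => sInf (B m).1
  have hB_succ : ∀ m, (B (m + 1)).1 ⊆ (B m).1 ∩ Ioi (x m) := fun m => hnext_sub m (B m)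
  have hx_mem : ∀ m, x m ∈ (B m).1 := fun m => Nat.sInf_mem (B m).2.nonempty
  have hB_anti : Antitone fun m => (B m).1 :=
    antitone_nat_of_succ_le fun m => (hB_succ m).trans inter_subset_left
  have hx_mono : StrictMono x := strictMono_nat_of_lt_succ fun m => (hB_succ m (hx_mem (m + 1))).2
  refine ⟨range x, range_subset_iff.2 fun m => hB_anti (Nat.zero_le m) (hx_mem m),
    infinite_range_of_injective hx_mono.injective, fun m => ⟨x m + 1, fun X _ => ?_⟩⟩
  have htail : range x \ Iio (x m + 1) ⊆ (B (m + 1)).1 := by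
    rintro _ ⟨⟨j, rfl⟩, hj⟩
    have hmj : m + 1 ≤ j := hx_mono.lt_iff_lt.1 (by simpa [Nat.lt_succ_iff] using hj)
    exact hB_anti hmj (hx_mem j)
  exact hmono m (slice_subset_ellSet htail)
    (hnext_P m (B m) _ (Finset.mem_powerset.2 (Finset.filter_subset _ _)))

theorem RamseyNull.iUnion {N : ℕ → Set (Set ℕ)} (hN : ∀ m, RamseyNull (N m)) :
    RamseyNull (⋃ m, N m) := by
  intro a A hA
  obtain ⟨D, hDA, hD, hslice⟩ := ellSet_fusion (fun m W => W ∩ N m = ∅)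
    (fun m _ _ h hV => subset_eq_empty (inter_subset_inter_left _ h) hV)
    (fun m a A hA => hN m a A hA) a hA
  refine ⟨D, hDA, hD, eq_empty_of_forall_notMem ?_⟩
  rintro X ⟨hX, hXN⟩
  obtain ⟨m, hXm⟩ := mem_iUnion.1 hXN
  obtain ⟨n, hn⟩ := hslice m
  exact (hn X hX).subset ⟨⟨hX, fun _ _ => Iff.rfl⟩, hXm⟩

lemma continuous_of_dependsOn_finset {ι α β : Type*} [TopologicalSpace α] [DiscreteTopology α]
    [TopologicalSpace β] {f : (ι → α) → β} {s : Finset ι} (hf : DependsOn f s) :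
    Continuous f := by
  refine IsLocallyConstant.continuous ((IsLocallyConstant.iff_exists_open f).2 fun x => ?_)
  exact ⟨(s : Set ι).pi fun i => {x i}, isOpen_set_pi s.finite_toSet fun _ _ => isOpen_discrete _,
    fun i _ => rfl, fun y hy => hf fun i hi => hy i hi⟩

lemma exists_continuous_of_finitely_determined {Z ι ι' α : Type*} [TopologicalSpace α]
    [DiscreteTopology α] {S : Set Z} (χ : Z → ι → α) (c : Z → ι' → Bool)
    (hc : ∀ m, ∃ e : Finset ι, ∀ x ∈ S, ∀ y ∈ S, (∀ i ∈ e, χ x i = χ y i) → c x m = c y m) :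
    ∃ φ : (ι → α) → ι' → Bool, Continuous φ ∧ ∀ x ∈ S, c x = φ (χ x) := by
  classical
  choose e he using hc
  refine ⟨fun f m => decide (∃ x ∈ S, (∀ i ∈ e m, χ x i = f i) ∧ c x m = true),
    continuous_pi fun m => continuous_of_dependsOn_finset (s := e m) fun f g hfg => ?_,
    fun x hx => funext fun m => ?_⟩
  · have hagree : ∀ x, (∀ i ∈ e m, χ x i = f i) ↔ ∀ i ∈ e m, χ x i = g i :=
      fun x => forall₂_congr fun i hi => by rw [hfg i hi]
    simp only [hagree]
  · rw [Bool.eq_iff_iff, decide_eq_true_iff]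
    exact ⟨fun h => ⟨x, hx, fun _ _ => rfl, h⟩,
      fun ⟨y, hy, hyx, h⟩ => he m y hy x hx hyx ▸ h⟩

lemma boolIndicator_setOf_eq_true {α : Type*} (f : α → Bool) : {x | f x = true}.boolIndicator = f :=
  funext fun x => by rw [Bool.eq_iff_iff, ← mem_iff_boolIndicator]; rfl

lemma boolIndicator_injective {α : Type*} : Function.Injective (boolIndicator : Set α → α → Bool) :=
  fun s t h => ext fun x => by rw [mem_iff_boolIndicator, mem_iff_boolIndicator, h]

lemma isClosed_image_boolIndicator_Icc {α : Type*} (s t : Set α) :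
    IsClosed (boolIndicator '' Icc s t) := by
  have : boolIndicator '' Icc s t =
      ⋂ x, (fun f : α → Bool => f x) ⁻¹' {b | (x ∈ s → b = true) ∧ (b = true → x ∈ t)} := by
    ext f
    simp only [mem_iInter, mem_preimage, mem_ofPred_eq]
    constructor
    · rintro ⟨X, ⟨hsX, hXt⟩, rfl⟩ x
      simp only [← mem_iff_boolIndicator]
      exact ⟨fun hx => hsX hx, fun hx => hXt hx⟩
    · intro hf
      exact ⟨{x | f x = true}, ⟨fun x hx => (hf x).1 hx, fun x hx => (hf x).2 hx⟩,
        boolIndicator_setOf_eq_true f⟩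
  rw [this]
  exact isClosed_iInter fun x => (isClosed_discrete _).preimage (continuous_apply x)

lemma IsClosed.continuum_le_mk_of_not_countable {α : Type} [TopologicalSpace α]
    [SeparableSpace α] [IsCompletelyMetrizableSpace α]
    {C : Set α} (hC : IsClosed C) (hunc : ¬ C.Countable) : 𝔠 ≤ #C := by
  obtain ⟨f, hfC, -, hf⟩ := hC.exists_nat_bool_injection_of_not_countable hunc
  calc 𝔠 = #(ℕ → Bool) := by rw [← power_def, mk_bool, mk_nat, two_power_aleph0]
    _ ≤ #C := mk_le_of_injective (f := codRestrict f C fun x => hfC ⟨x, rfl⟩)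
        fun x y h => hf (congrArg Subtype.val h)

lemma le_mk_of_le_mk_union_of_countable {α : Type*} {κ : Cardinal} (hκ : ℵ₀ < κ) {S T : Set α}
    (hST : κ ≤ #(S ∪ T : Set α)) (hT : T.Countable) : κ ≤ #S := by
  by_contra! hS
  exact hST.not_gt <| (mk_union_le S T).trans_lt <|
    add_lt_of_lt hκ.le hS ((mk_le_aleph0_iff.2 hT.to_subtype).trans_lt hκ)

lemma exists_injective_forall_mem {α β : Type u} (S : α → Set β) (hS : ∀ a, #α ≤ #(S a)) :
    ∃ g : α → β, Function.Injective g ∧ ∀ a, g a ∈ S a := by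
  obtain ⟨r, hr, hord⟩ := exists_ord_eq α
  have pick : ∀ a (f : {b // r b a} → β), ∃ y ∈ S a, y ∉ range f := by
    intro a f
    by_contra! h
    have hseg : #{b // r b a} < #α := by
      simpa only [Ordinal.card_typein] using card_typein_lt (r := r) a hord
    exact ((mk_le_mk_of_subset h).trans mk_range_le).not_gt (hseg.trans_le (hS a))
  choose p hpS hpnew using pick
  let g : α → β := hr.wf.fix fun a ih => p a fun b => ih b.1 b.2
  have hg : ∀ a, g a = p a fun b => g b.1 := hr.wf.fix_eq _
  refine ⟨g, fun a b hab => ?_, fun a => hg a ▸ hpS _ _⟩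
  rcases trichotomous_of r a b with h | h | h
  · exact absurd ⟨⟨a, h⟩, hab⟩ (hg b ▸ hpnew b _)
  · exact h
  · exact absurd ⟨⟨b, h⟩, hab.symm⟩ (hg a ▸ hpnew a _)

theorem exists_inter_nonempty_diff_nonempty {α β : Type u} (S : α → Set β) {κ : Cardinal.{u}}
    (hκ : ℵ₀ ≤ κ) (hα : #α ≤ κ) (hS : ∀ a, κ ≤ #(S a)) :
    ∃ T : Set β, ∀ a, (S a ∩ T).Nonempty ∧ (S a \ T).Nonempty := by
  have hαBool : #(α × Bool) ≤ κ := by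
    simp only [mk_prod, lift_uzero, mk_bool, lift_ofNat]
    exact (mul_le_max _ _).trans (max_le (max_le hα ((natCast_lt_aleph0 (n := 2)).le.trans hκ)) hκ)
  obtain ⟨g, hg, hgS⟩ := exists_injective_forall_mem (fun p : α × Bool => S p.1)
    fun p => hαBool.trans (hS p.1)
  refine ⟨range fun a => g (a, true), fun a =>
    ⟨⟨g (a, true), hgS (a, true), a, rfl⟩, ⟨g (a, false), hgS (a, false), ?_⟩⟩⟩
  rintro ⟨b, hb⟩
  simpa using hg hb

theorem exists_continuous_eqOn_ellSet {M : Set (Set ℕ)} {c : Set ℕ → ℕ → Bool}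
    (hc : ∀ m, CRSet (M ∩ c ⁻¹' {v | v m = true})) {a : Finset ℕ} {A : Set ℕ}
    (hA : A.Infinite) (hAM : EllSet a A ⊆ M) :
    ∃ D ⊆ A, D.Infinite ∧ ∃ φ : (ℕ → Bool) → ℕ → Bool, Continuous φ ∧
      ∀ X ∈ EllSet a D, c X = φ X.boolIndicator := by
  let V m := M ∩ c ⁻¹' {v | v m = true}
  obtain ⟨D, hDA, hD, hslice⟩ := ellSet_fusion (fun m W => W ⊆ V m ∨ W ∩ V m = ∅)
    (fun m _ _ h hV => hV.imp h.trans fun hV => subset_eq_empty (inter_subset_inter_left _ h) hV)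
    (fun m a A hA => hc m a A hA) a hA
  refine ⟨D, hDA, hD, exists_continuous_of_finitely_determined _ _ fun m => ?_⟩
  obtain ⟨n, hn⟩ := hslice m
  refine ⟨Finset.range n, fun X hX Y hY hXY => ?_⟩
  have hYX : ∀ k < n, k ∈ Y ↔ k ∈ X := fun k hk => by
    rw [mem_iff_boolIndicator, mem_iff_boolIndicator, hXY k (Finset.mem_range.2 hk)]
  have hV : ∀ Z ∈ EllSet a D, Z ∈ V m ↔ c Z m = true := fun Z hZ =>
    and_iff_right (hAM (ellSet_mono hDA hZ))
  rw [Bool.eq_iff_iff, ← hV X hX, ← hV Y hY]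
  rcases hn X hX with hsub | hdisj
  · exact iff_of_true (hsub ⟨hX, fun _ _ => Iff.rfl⟩) (hsub ⟨hY, hYX⟩)
  · exact iff_of_false (fun h => hdisj.subset ⟨⟨hX, fun _ _ => Iff.rfl⟩, h⟩)
      (fun h => hdisj.subset ⟨⟨hY, hYX⟩, h⟩)

lemma not_countable_image_ellSet {β : Type*} {M : Set (Set ℕ)} {c : Set ℕ → β}
    (hfib : ∀ X ∈ M, RamseyNull (M ∩ c ⁻¹' {c X})) {a : Finset ℕ} {B : Set ℕ} (hB : B.Infinite)
    (hBM : EllSet a B ⊆ M) : ¬ (c '' EllSet a B).Countable := by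
  intro hcount
  obtain ⟨v, hv⟩ := hcount.exists_eq_range ⟨_, mem_image_of_mem c (union_mem_ellSet a hB)⟩
  have hv_mem : ∀ n, v n ∈ c '' EllSet a B := fun n => hv ▸ mem_range_self n
  choose X hX hXv using hv_mem
  refine not_ramseyNull_ellSet a hB ((RamseyNull.iUnion fun n => hfib _ (hBM (hX n))).mono ?_)
  intro Y hY
  obtain ⟨n, hn⟩ : c Y ∈ range v := hv ▸ mem_image_of_mem c hY
  exact mem_iUnion.2 ⟨n, hBM hY, ((hXv n).trans hn).symm⟩

lemma continuum_le_mk_image_ellSet {c : Set ℕ → ℕ → Bool} {φ : (ℕ → Bool) → ℕ → Bool}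
    (hφ : Continuous φ) {a : Finset ℕ} {B : Set ℕ} (hcφ : ∀ X ∈ EllSet a B, c X = φ X.boolIndicator)
    (hunc : ¬ (c '' EllSet a B).Countable) : 𝔠 ≤ #(c '' EllSet a B) := by
  let K := boolIndicator '' Icc (a : Set ℕ) (↑a ∪ B)
  have hK : IsClosed (φ '' K) :=
    ((isClosed_image_boolIndicator_Icc _ _).isCompact.image hφ).isClosed
  have himage : c '' EllSet a B ⊆ φ '' K := by
    rintro _ ⟨X, hX, rfl⟩
    exact ⟨X.boolIndicator, ⟨X, hX.2, rfl⟩, (hcφ X hX).symm⟩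
  have hcover : φ '' K ⊆ c '' EllSet a B ∪ (φ ∘ boolIndicator) '' {X | X.Finite} := by
    rintro _ ⟨_, ⟨X, hX, rfl⟩, rfl⟩
    by_cases hXfin : X.Finite
    · exact Or.inr ⟨X, hXfin, rfl⟩
    · exact Or.inl ⟨X, ⟨hXfin, hX⟩, hcφ X ⟨hXfin, hX⟩⟩
  have hfin : {X : Set ℕ | X.Finite}.Countable :=
    (countable_range ((↑) : Finset ℕ → Set ℕ)).mono
      fun _ hX => mem_range.2 ⟨hX.toFinset, Finite.coe_toFinset hX⟩
  exact le_mk_of_le_mk_union_of_countable aleph0_lt_continuum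
    ((hK.continuum_le_mk_of_not_countable fun h => hunc (h.mono himage)).trans
      (mk_le_mk_of_subset hcover)) (hfin.image _)

theorem ramseyNull_of_crSet_preimage {M : Set (Set ℕ)} (c : Set ℕ → ℕ → Bool)
    (hCR : ∀ T, CRSet (M ∩ c ⁻¹' T)) (hfib : ∀ X ∈ M, RamseyNull (M ∩ c ⁻¹' {c X})) :
    RamseyNull M := by
  by_contra hnull
  obtain ⟨a, A, hA, hAM⟩ := (by simpa using hCR univ : CRSet M).exists_ellSet_subset hnull
  obtain ⟨D, hDA, hD, φ, hφ, hcφ⟩ := exists_continuous_eqOn_ellSet (fun m => hCR _) hA hAM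
  have hDM : EllSet a D ⊆ M := (ellSet_mono hDA).trans hAM
  let Cube := {B : Set ℕ // B ⊆ D ∧ B.Infinite}
  have hCube : #Cube ≤ 𝔠 := by
    simpa [mk_set, two_power_aleph0] using mk_subtype_le (fun B : Set ℕ => B ⊆ D ∧ B.Infinite)
  obtain ⟨T, hT⟩ := exists_inter_nonempty_diff_nonempty (fun B : Cube => c '' EllSet a B.1)
    aleph0_le_continuum hCube fun B => continuum_le_mk_image_ellSet hφ
      (fun X hX => hcφ X (ellSet_mono B.2.1 hX))
      (not_countable_image_ellSet hfib B.2.2 ((ellSet_mono B.2.1).trans hDM))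
  obtain ⟨B, hBD, hB, hBT⟩ := hCR T a D hD
  obtain ⟨⟨_, ⟨X, hX, rfl⟩, hXT⟩, ⟨_, ⟨Y, hY, rfl⟩, hYT⟩⟩ := hT ⟨B, hBD, hB⟩
  rcases hBT with hsub | hdisj
  · exact hYT (hsub hY).2
  · exact hdisj.subset ⟨hX, hDM (ellSet_mono hBD hX), hXT⟩

lemma exists_code_of_pairwise_disjoint {α β : Type*} [Nonempty α] {ι : α → β}
    (hι : Function.Injective ι) {𝓕 : Set (Set α)}
    (hdisj : ∀ F ∈ 𝓕, ∀ G ∈ 𝓕, F ≠ G → Disjoint F G) :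
    ∃ c : α → β, ∀ F ∈ 𝓕, ∀ G ∈ 𝓕, ∀ X ∈ F, ∀ Y ∈ G, (c X = c Y ↔ F = G) := by
  let piece (X : α) : Set α := Classical.epsilon fun F => F ∈ 𝓕 ∧ X ∈ F
  have hpiece : ∀ F ∈ 𝓕, ∀ X ∈ F, piece X = F := fun F hF X hX => by
    obtain ⟨hpiece, hX'⟩ := Classical.epsilon_spec (p := fun F => F ∈ 𝓕 ∧ X ∈ F) ⟨F, hF, hX⟩
    by_contra hne
    exact disjoint_left.1 (hdisj _ hpiece F hF hne) hX' hX
  refine ⟨fun X => ι (Classical.epsilon (· ∈ piece X)), fun F hF G hG X hX Y hY => ?_⟩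
  simp only [hpiece F hF X hX, hpiece G hG Y hY]
  refine ⟨fun h => ?_, fun h => h ▸ rfl⟩
  by_contra hne
  exact disjoint_left.1 (hdisj F hF G hG hne) (Classical.epsilon_spec ⟨X, hX⟩)
    (hι h ▸ Classical.epsilon_spec ⟨Y, hY⟩)

theorem no_kuratowski_partition_ellentuck_general (M : Set (Set ℕ))
    (hM : ¬ RamseyNull M) :
    ¬ ∃ 𝓕 : Set (Set (Set ℕ)),
        ⋃₀ 𝓕 = M ∧
        (∀ F ∈ 𝓕, ∀ G ∈ 𝓕, F ≠ G → Disjoint F G) ∧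
        (∀ F ∈ 𝓕, RamseyNull F) ∧
        (∀ 𝓕' ⊆ 𝓕, CRSet (⋃₀ 𝓕')) := by
  rintro ⟨𝓕, rfl, hdisj, hnull, hCR⟩
  obtain ⟨c, hc⟩ := exists_code_of_pairwise_disjoint boolIndicator_injective hdisj
  refine hM (ramseyNull_of_crSet_preimage c (fun T => ?_) ?_)
  · have hunion : ⋃₀ 𝓕 ∩ c ⁻¹' T = ⋃₀ {F ∈ 𝓕 | F ⊆ c ⁻¹' T} := by
      refine subset_antisymm ?_ fun X ⟨F, ⟨hF, hFT⟩, hX⟩ => ⟨⟨F, hF, hX⟩, hFT hX⟩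
      rintro X ⟨⟨F, hF, hX⟩, hXT⟩
      exact ⟨F, ⟨hF, fun Y hY => by rwa [mem_preimage, (hc F hF F hF Y hY X hX).2 rfl]⟩, hX⟩
    exact hunion ▸ hCR _ (sep_subset _ _)
  · rintro X ⟨F, hF, hX⟩
    exact (hnull F hF).mono fun Y ⟨⟨G, hG, hY⟩, hYX⟩ => (hc G hG F hF Y hY X hX).1 hYX ▸ hY

/-- No Ellentuck open dense set which is not Ramsey null admits a Kuratowski partition. -/
theorem no_kuratowski_partition_ellentuck (M : Set (Set ℕ))
    (hopen : EllOpen M) (hdense : EllDense M) (hM : ¬ RamseyNull M) :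
    ¬ ∃ 𝓕 : Set (Set (Set ℕ)),
        ⋃₀ 𝓕 = M ∧
        (∀ F ∈ 𝓕, ∀ G ∈ 𝓕, F ≠ G → Disjoint F G) ∧
        (∀ F ∈ 𝓕, RamseyNull F) ∧
        (∀ 𝓕' ⊆ 𝓕, CRSet (⋃₀ 𝓕')) :=
  no_kuratowski_partition_ellentuck_general M hM
end
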